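/- Let Q be an admissible subset of ℝ^d, let s ∈ (0,1), and let f : Q → [0,∞) be measurable. Then J(f,Q,s) = (1/2)·inf{ f^*(u) − f^*(u + (1−s)·λ(Q)) : 0 < u < s·λ(Q) }, where f^* is the non-increasing rearrangement of f (extended by 0 off Q). -/
import Mathlib


open MeasureTheory Set

/-- The John–Strömberg functional
`J(f,E,s) = inf_{c ∈ ℝ} inf {α ≥ 0 : μ({x ∈ E : |f(x) − c| > α}) < s·μ(E)}`. -/
noncomputable def JS {X : Type*} [MeasurableSpace X] (μ : Measure X)
    (f : X → ℝ) (E : Set X) (s : ℝ) : ℝ :=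
  sInf {α : ℝ | 0 ≤ α ∧ ∃ c : ℝ, μ {x ∈ E | α < |f x - c|} < ENNReal.ofReal s * μ E}

/-- An admissible set: measurable with positive finite measure. -/
def Admissible {X : Type*} [MeasurableSpace X] (μ : Measure X) (E : Set X) : Prop :=
  MeasurableSet E ∧ 0 < μ E ∧ μ E < ⊤

/-- The non-increasing rearrangement `g^*(t) = inf {α > 0 : μ({x : g x > α}) ≤ t}`. -/
noncomputable def rearr {X : Type*} [MeasurableSpace X] (μ : Measure X)
    (g : X → ℝ) (t : ℝ) : ℝ :=
  sInf {α : ℝ | 0 < α ∧ μ {x | α < g x} ≤ ENNReal.ofReal t}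

private def RS {X : Type*} [MeasurableSpace X] (μ : Measure X) (g : X → ℝ) (t : ℝ) : Set ℝ :=
  {α : ℝ | 0 < α ∧ μ {x | α < g x} ≤ ENNReal.ofReal t}

private lemma rearr_eq_RS {X : Type*} [MeasurableSpace X] (μ : Measure X) (g : X → ℝ) (t : ℝ) :
    rearr μ g t = sInf (RS μ g t) := rfl

private lemma RS_bdd {X : Type*} [MeasurableSpace X] (μ : Measure X) (g : X → ℝ) (t : ℝ) :
    BddBelow (RS μ g t) := ⟨0, fun _ ha => ha.1.le⟩

private lemma rearr_nonneg {X : Type*} [MeasurableSpace X] (μ : Measure X) (g : X → ℝ) (t : ℝ) :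
    0 ≤ rearr μ g t := Real.sInf_nonneg (fun _ ha => ha.1.le)

private lemma RS_nonempty {X : Type*} [MeasurableSpace X] {μ : Measure X} {g : X → ℝ}
    (hg : Measurable g) (hfin : μ {x | 0 < g x} ≠ ⊤) {t : ℝ} (ht : 0 < t) :
    (RS μ g t).Nonempty := by
  have hanti : Antitone (fun n : ℕ => {x | (n : ℝ) + 1 < g x}) := by
    intro m n hmn x hx
    simp only [Set.mem_setOf_eq] at *
    have : (m : ℝ) ≤ n := Nat.cast_le.mpr hmn
    linarith
  have hmeas : ∀ n : ℕ, NullMeasurableSet {x | (n : ℝ) + 1 < g x} μ :=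
    fun n => (measurableSet_lt measurable_const hg).nullMeasurableSet
  have hfin' : ∃ n : ℕ, μ {x | (n : ℝ) + 1 < g x} ≠ ⊤ := by
    refine ⟨0, ne_top_of_le_ne_top hfin (measure_mono ?_)⟩
    intro x hx; simp only [Set.mem_setOf_eq] at *; linarith
  have hempty : ⋂ n : ℕ, {x | (n : ℝ) + 1 < g x} = ∅ := by
    ext x
    simp only [Set.mem_iInter, Set.mem_setOf_eq, Set.mem_empty_iff_false, iff_false]
    push_neg
    obtain ⟨n, hn⟩ := exists_nat_gt (g x)
    exact ⟨n, by linarith⟩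
  have htend := tendsto_measure_iInter_atTop hmeas hanti hfin'
  rw [hempty, measure_empty] at htend
  obtain ⟨n, hn⟩ := ((tendsto_order.1 htend).2 _ (ENNReal.ofReal_pos.mpr ht)).exists
  exact ⟨(n : ℝ) + 1, by positivity, hn.le⟩

private lemma rearr_le' {X : Type*} [MeasurableSpace X] {μ : Measure X} {g : X → ℝ}
    {t β : ℝ} (hβ : 0 < β) (h : μ {x | β < g x} ≤ ENNReal.ofReal t) :
    rearr μ g t ≤ β := csInf_le (RS_bdd μ g t) ⟨hβ, h⟩

theorem stmt11 {d : ℕ} (Q : Set (Fin d → ℝ)) (hQ : Admissible volume Q)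
    (s : ℝ) (hs : s ∈ Set.Ioo (0:ℝ) 1)
    (f : (Fin d → ℝ) → ℝ) (hf : Measurable f) (hf0 : ∀ x ∈ Q, 0 ≤ f x) :
    JS volume f Q s =
      (1/2) * sInf ((fun u => rearr volume (Q.indicator f) u -
          rearr volume (Q.indicator f) (u + (1 - s) * (volume Q).toReal)) ''
        Set.Ioo 0 (s * (volume Q).toReal)) := by
  obtain ⟨hQm, hQ0, hQfin⟩ := hQ
  obtain ⟨hs0, hs1⟩ := hs
  have hg : Measurable (Q.indicator f) := hf.indicator hQm
  set g := Q.indicator f with hgdef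
  set M := ((volume : Measure (Fin d → ℝ)) Q).toReal with hMdef
  have hM0 : 0 < M := ENNReal.toReal_pos hQ0.ne' hQfin.ne
  have hMQ : ENNReal.ofReal M = volume Q := ENNReal.ofReal_toReal hQfin.ne
  have hsM : ENNReal.ofReal s * volume Q = ENNReal.ofReal (s * M) := by
    rw [← hMQ, ← ENNReal.ofReal_mul hs0.le]
  have hsM0 : 0 < s * M := mul_pos hs0 hM0
  have hset : ∀ β : ℝ, 0 ≤ β → {x | β < g x} = {x | x ∈ Q ∧ β < f x} := by
    intro β hβ; ext x
    simp only [Set.mem_setOf_eq]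
    constructor
    · intro h
      by_cases hx : x ∈ Q
      · exact ⟨hx, by rwa [hgdef, Set.indicator_of_mem hx] at h⟩
      · rw [hgdef, Set.indicator_of_notMem hx] at h; linarith
    · rintro ⟨hx, h⟩; rwa [hgdef, Set.indicator_of_mem hx]
  have hfin : volume {x | 0 < g x} ≠ ⊤ := by
    refine ne_top_of_le_ne_top hQfin.ne (measure_mono ?_)
    rw [hset 0 le_rfl]; exact fun x hx => hx.1
  have hfing : ∀ β : ℝ, 0 ≤ β → volume {x | β < g x} ≤ volume Q := by
    intro β hβ; rw [hset β hβ]; exact measure_mono (fun x hx => hx.1)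
  have hNE : ∀ t : ℝ, 0 < t → (RS volume g t).Nonempty := fun t ht => RS_nonempty hg hfin ht
  have hanti : ∀ u v : ℝ, 0 < u → u ≤ v → rearr volume g v ≤ rearr volume g u := by
    intro u v hu huv
    rw [rearr_eq_RS, rearr_eq_RS]
    refine csInf_le_csInf (RS_bdd volume g v) (hNE u hu) ?_
    rintro β ⟨hβ0, hβle⟩
    exact ⟨hβ0, hβle.trans (ENNReal.ofReal_le_ofReal huv)⟩
  have hmeasle : ∀ t ε : ℝ, 0 < t → 0 < ε →
      volume {x | rearr volume g t + ε < g x} ≤ ENNReal.ofReal t := by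
    intro t ε ht hε
    have hlt : sInf (RS volume g t) < rearr volume g t + ε := by
      rw [← rearr_eq_RS]; linarith
    obtain ⟨β, hβmem, hβlt⟩ := (csInf_lt_iff (RS_bdd volume g t) (hNE t ht)).mp hlt
    refine le_trans (measure_mono ?_) hβmem.2
    intro x hx
    simp only [Set.mem_setOf_eq] at *
    linarith
  set B := ((fun u => rearr volume g u - rearr volume g (u + (1 - s) * M)) ''
      Set.Ioo 0 (s * M)) with hBdef
  have hBne : B.Nonempty := ⟨_, ⟨s * M / 2, Set.mem_Ioo.mpr ⟨by positivity, by linarith⟩, rfl⟩⟩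
  have hBbdd : BddBelow B := by
    refine ⟨0, ?_⟩
    rintro b ⟨u, hu, rfl⟩
    have h1s : (0:ℝ) ≤ (1 - s) * M := by nlinarith
    have := hanti u (u + (1 - s) * M) hu.1 (by linarith)
    simp only [sub_nonneg]
    linarith
  set A := {α : ℝ | 0 ≤ α ∧ ∃ c : ℝ,
      volume {x ∈ Q | α < |f x - c|} < ENNReal.ofReal s * volume Q} with hAdef
  have hJS : JS volume f Q s = sInf A := rfl
  have hAbdd : BddBelow A := ⟨0, fun _ ha => ha.1⟩
  have hAne : A.Nonempty := by
    obtain ⟨β, hβ0, hβle⟩ := hNE (s * M / 2) (by positivity)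
    refine ⟨β, hβ0.le, 0, ?_⟩
    have hseteq : {x ∈ Q | β < |f x - 0|} = {x | β < g x} := by
      rw [hset β hβ0.le]; ext x
      simp only [Set.mem_setOf_eq, sub_zero]
      constructor
      · rintro ⟨hx, h⟩; exact ⟨hx, by rwa [abs_of_nonneg (hf0 x hx)] at h⟩
      · rintro ⟨hx, h⟩; exact ⟨hx, by rwa [abs_of_nonneg (hf0 x hx)]⟩
    rw [hseteq, hsM]
    exact hβle.trans_lt ((ENNReal.ofReal_lt_ofReal_iff hsM0).mpr (by linarith))
  -- Part 1 : JS ≤ (1/2) * sInf B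
  have part1 : JS volume f Q s ≤ (1/2) * sInf B := by
    have key : ∀ u ∈ Set.Ioo (0:ℝ) (s * M),
        2 * JS volume f Q s ≤ rearr volume g u - rearr volume g (u + (1 - s) * M) := by
      rintro u ⟨hu0, huM⟩
      set v := u + (1 - s) * M with hvdef
      have h1s : (0:ℝ) < (1 - s) * M := by nlinarith
      have hv0 : 0 < v := by rw [hvdef]; linarith
      have hvM : v < M := by rw [hvdef]; nlinarith
      have hFvu : rearr volume g v ≤ rearr volume g u := hanti u v hu0 (by rw [hvdef]; linarith)
      set Fu := rearr volume g u with hFudef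
      set Fv := rearr volume g v with hFvdef
      have claim : ∀ ε : ℝ, 0 < ε → (Fu - Fv) / 2 + ε ∈ A := by
        intro ε hε
        set c := (Fu + Fv) / 2 with hcdef
        set α := (Fu - Fv) / 2 + ε with hαdef
        refine ⟨by rw [hαdef]; linarith, c, ?_⟩
        have hsub2 : {x ∈ Q | α < |f x - c|} ⊆
            {x | Fu + ε < g x} ∪ {x | x ∈ Q ∧ f x < Fv - ε} := by
          rintro x ⟨hxQ, hx⟩
          rcases lt_abs.mp hx with h | h
          · left
            show Fu + ε < g x
            rw [hgdef, Set.indicator_of_mem hxQ]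
            rw [hαdef, hcdef] at h; linarith
          · right
            refine ⟨hxQ, ?_⟩
            rw [hαdef, hcdef] at h; linarith
        have h1 : volume {x | Fu + ε < g x} ≤ ENNReal.ofReal u := hmeasle u ε hu0 hε
        rw [hsM]
        rcases eq_or_lt_of_le (rearr_nonneg volume g v) with hFv0 | hFv0
        · rw [← hFvdef] at hFv0
          have hempty : {x | x ∈ Q ∧ f x < Fv - ε} = ∅ := by
            ext x
            simp only [Set.mem_setOf_eq, Set.mem_empty_iff_false, iff_false, not_and]
            intro hx h
            have := hf0 x hx
            linarith
          calc volume {x ∈ Q | α < |f x - c|}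
              ≤ volume ({x | Fu + ε < g x} ∪ {x | x ∈ Q ∧ f x < Fv - ε}) :=
                measure_mono hsub2
            _ ≤ volume {x | Fu + ε < g x} + volume {x | x ∈ Q ∧ f x < Fv - ε} :=
                measure_union_le _ _
            _ = volume {x | Fu + ε < g x} := by rw [hempty, measure_empty, add_zero]
            _ ≤ ENNReal.ofReal u := h1
            _ < ENNReal.ofReal (s * M) := (ENNReal.ofReal_lt_ofReal_iff hsM0).mpr huM
        · set β := max (Fv - ε) (Fv / 2) with hβdef
          have hβ0 : 0 < β := lt_max_of_lt_right (by linarith)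
          have hβFv : β < Fv := max_lt (by linarith) (by linarith)
          have hw : ENNReal.ofReal v < volume {x | β < g x} := by
            by_contra hcon; push_neg at hcon
            exact absurd (rearr_le' hβ0 hcon) (not_le.mpr hβFv)
          have hwfin : volume {x | β < g x} ≠ ⊤ :=
            ne_top_of_le_ne_top hQfin.ne (hfing β hβ0.le)
          set w := (volume {x | β < g x}).toReal with hwdef
          have hvw : v < w := (ENNReal.ofReal_lt_iff_lt_toReal hv0.le hwfin).mp hw
          have hwM : w ≤ M := ENNReal.toReal_mono hQfin.ne (hfing β hβ0.le)
          have hs2 : {x | x ∈ Q ∧ f x < Fv - ε} ⊆ Q \ {x | β < g x} := by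
            rintro x ⟨hxQ, hfx⟩
            refine ⟨hxQ, fun hxg => ?_⟩
            rw [Set.mem_setOf_eq, hgdef, Set.indicator_of_mem hxQ] at hxg
            have : Fv - ε ≤ β := le_max_left _ _
            linarith
          have hdiff : volume (Q \ {x | β < g x}) = ENNReal.ofReal (M - w) := by
            rw [measure_diff ?_ (measurableSet_lt measurable_const hg).nullMeasurableSet hwfin]
            · rw [← hMQ, ← ENNReal.ofReal_toReal hwfin, ← hwdef]
              exact (ENNReal.ofReal_sub M ENNReal.toReal_nonneg).symm
            · rw [hset β hβ0.le]; exact fun x hx => hx.1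
          calc volume {x ∈ Q | α < |f x - c|}
              ≤ volume ({x | Fu + ε < g x} ∪ {x | x ∈ Q ∧ f x < Fv - ε}) :=
                measure_mono hsub2
            _ ≤ volume {x | Fu + ε < g x} + volume {x | x ∈ Q ∧ f x < Fv - ε} :=
                measure_union_le _ _
            _ ≤ ENNReal.ofReal u + ENNReal.ofReal (M - w) := by
                exact add_le_add h1 (hdiff ▸ measure_mono hs2)
            _ = ENNReal.ofReal (u + (M - w)) := (ENNReal.ofReal_add hu0.le (by linarith)).symm
            _ < ENNReal.ofReal (s * M) := by
                refine (ENNReal.ofReal_lt_ofReal_iff hsM0).mpr ?_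
                rw [hvdef] at hvw; linarith
      have hle : JS volume f Q s ≤ (Fu - Fv) / 2 := by
        refine le_of_forall_pos_le_add (fun ε hε => ?_)
        rw [hJS]
        exact csInf_le hAbdd (claim ε hε)
      linarith
    have h2 : 2 * JS volume f Q s ≤ sInf B := by
      refine le_csInf hBne ?_
      rintro b ⟨u, hu, rfl⟩
      exact key u hu
    linarith
  -- Part 2 : (1/2) * sInf B ≤ JS
  have part2 : (1/2) * sInf B ≤ JS volume f Q s := by
    rw [hJS]
    refine le_csInf hAne ?_
    rintro α ⟨hα0, c, hc⟩
    rw [hsM] at hc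
    have hca : 0 ≤ c + α := by
      by_contra hneg; push_neg at hneg
      have hQE : Q ⊆ {x ∈ Q | α < |f x - c|} := by
        intro x hx
        refine ⟨hx, ?_⟩
        have := hf0 x hx
        rw [lt_abs]; left; linarith
      have h1 := (measure_mono hQE).trans_lt hc
      have h2 : ENNReal.ofReal (s * M) < volume Q := by
        rw [← hMQ]
        exact (ENNReal.ofReal_lt_ofReal_iff hM0).mpr (by nlinarith)
      exact absurd (h1.trans h2) (lt_irrefl _)
    set a := volume {x | x ∈ Q ∧ c + α < f x} with hadef
    set b := volume {x | x ∈ Q ∧ f x < c - α} with hbdef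
    have hafin : a ≠ ⊤ :=
      ne_top_of_le_ne_top hQfin.ne (measure_mono (fun x hx => hx.1))
    have hbfin : b ≠ ⊤ :=
      ne_top_of_le_ne_top hQfin.ne (measure_mono (fun x hx => hx.1))
    have hdisj : Disjoint {x | x ∈ Q ∧ c + α < f x} {x | x ∈ Q ∧ f x < c - α} := by
      rw [Set.disjoint_left]
      rintro x ⟨_, h1⟩ ⟨_, h2⟩
      linarith
    have hsubE : {x | x ∈ Q ∧ c + α < f x} ∪ {x | x ∈ Q ∧ f x < c - α} ⊆
        {x ∈ Q | α < |f x - c|} := by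
      rintro x (⟨hxQ, h⟩ | ⟨hxQ, h⟩)
      · exact ⟨hxQ, lt_abs.mpr (Or.inl (by linarith))⟩
      · exact ⟨hxQ, lt_abs.mpr (Or.inr (by linarith))⟩
    have hab : a + b < ENNReal.ofReal (s * M) := by
      rw [hadef, hbdef,
        ← measure_union hdisj (hQm.inter (measurableSet_lt hf measurable_const))]
      exact (measure_mono hsubE).trans_lt hc
    set aR := a.toReal with haRdef
    set bR := b.toReal with hbRdef
    have haR : a = ENNReal.ofReal aR := (ENNReal.ofReal_toReal hafin).symm
    have hbR : b = ENNReal.ofReal bR := (ENNReal.ofReal_toReal hbfin).symm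
    have haR0 : 0 ≤ aR := ENNReal.toReal_nonneg
    have hbR0 : 0 ≤ bR := ENNReal.toReal_nonneg
    have habR : aR + bR < s * M := by
      have h1 : (a + b).toReal < s * M := ENNReal.toReal_lt_of_lt_ofReal hab
      rwa [ENNReal.toReal_add hafin hbfin] at h1
    set u := (aR + (s * M - bR)) / 2 with hudef
    have huaR : aR < u := by rw [hudef]; linarith
    have hu0 : 0 < u := by rw [hudef]; linarith
    have husM : u < s * M := by rw [hudef]; linarith
    set v := u + (1 - s) * M with hvdef
    have hv0 : 0 < v := by rw [hvdef]; nlinarith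
    have hvMb : v < M - bR := by rw [hvdef, hudef]; nlinarith
    have hFu : rearr volume g u ≤ c + α := by
      refine le_of_forall_pos_le_add (fun δ hδ => ?_)
      refine rearr_le' (by linarith) ?_
      rw [hset _ (by linarith)]
      calc volume {x | x ∈ Q ∧ c + α + δ < f x}
          ≤ a := measure_mono (by rintro x ⟨h1, h2⟩; exact ⟨h1, by linarith⟩)
        _ = ENNReal.ofReal aR := haR
        _ ≤ ENNReal.ofReal u := ENNReal.ofReal_le_ofReal huaR.le
    have hFv : c - α ≤ rearr volume g v := by
      rcases le_or_gt (c - α) 0 with h | h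
      · exact h.trans (rearr_nonneg volume g v)
      · rw [rearr_eq_RS]
        refine le_csInf (hNE v hv0) ?_
        rintro β ⟨hβ0, hβle⟩
        by_contra hβc; push_neg at hβc
        have hsupset : Q \ {x | x ∈ Q ∧ f x < c - α} ⊆ {x | β < g x} := by
          rintro x ⟨hxQ, hfx⟩
          have hfx' : ¬ (x ∈ Q ∧ f x < c - α) := hfx
          push_neg at hfx'
          have := hfx' hxQ
          show β < g x
          rw [hgdef, Set.indicator_of_mem hxQ]
          linarith
        have hmeasb : MeasurableSet {x | x ∈ Q ∧ f x < c - α} :=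
          hQm.inter (measurableSet_lt hf measurable_const)
        have hdiff : volume (Q \ {x | x ∈ Q ∧ f x < c - α}) = ENNReal.ofReal (M - bR) := by
          rw [measure_diff (fun x hx => hx.1) hmeasb.nullMeasurableSet hbfin]
          rw [← hMQ, ← hbdef, hbR]
          exact (ENNReal.ofReal_sub M hbR0).symm
        have hle1 : ENNReal.ofReal (M - bR) ≤ ENNReal.ofReal v :=
          (hdiff ▸ measure_mono hsupset).trans hβle
        have hle2 : M - bR ≤ v := (ENNReal.ofReal_le_ofReal_iff hv0.le).mp hle1
        linarith
    have hmem : rearr volume g u - rearr volume g v ∈ B :=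
      ⟨u, Set.mem_Ioo.mpr ⟨hu0, husM⟩, rfl⟩
    have hinf := csInf_le hBbdd hmem
    linarith
  linarith
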